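/- arXiv:1209.5912 — 3 statements merged into one kernel-verified Lean document; each statement's English description precedes it below -/
import Mathlib

section
/- Let 𝒦 = {K₁, …, K_M} be a finite set of row-stochastic N×N real matrices, each with strictly positive diagonal entries, let p₁, …, p_M be strictly positive reals summing to 1 with Σᵢ pᵢKᵢ primitive, and let (K(t))_{t≥1} be an i.i.d. sequence of random matrices on a probability space with ℙ[K(t) = Kᵢ] = pᵢ for each i. Set P(t) = K(1)K(2)⋯K(t); given x(0) ∈ ℝᴺ define s(t)ᵀ = x(0)ᵀP(t), w(t)ᵀ = 𝟙ᵀP(t), x(t) = s(t)/w(t) (entrywise quotient, well defined since every entry of w(t) is strictly positive because the matrices in 𝒦 have positive diagonals), and x_ave = (1/N)𝟙ᵀx(0). Then the mean squared error converges to zero: 𝔼[ ‖x(t) − x_ave𝟙‖₂² ] → 0 as t → ∞, for every x(0) ∈ ℝᴺ. -/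
open Matrix Finset MeasureTheory Filter

/-- A square real matrix is row-stochastic if it has nonnegative entries and
each of its rows sums to 1. -/
def RowStochastic {N : ℕ} (K : Matrix (Fin N) (Fin N) ℝ) : Prop :=
  (∀ i j, 0 ≤ K i j) ∧ ∀ i, ∑ j, K i j = 1

/-- A nonnegative square matrix `T` is primitive if `T ^ m` has all entries
strictly positive for some integer `m ≥ 1`. -/
def IsPrimitive {n : Type*} [Fintype n] [DecidableEq n] (T : Matrix n n ℝ) : Prop :=
  ∃ m : ℕ, 1 ≤ m ∧ ∀ i j, 0 < (T ^ m) i j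


/-!
For a positive matrix `P`, consider how much the ratios `P i j / P i' j` of two rows vary
with `j`. Right multiplication by a row-stochastic matrix with positive diagonal replaces each
ratio by a weighted average of the old ones, so this spread never grows; multiplication by a
row-stochastic matrix with all entries at least `ε` shrinks it by the factor `1 - ε`, and the
first such factor already bounds it by `1 / ε`. When the spread of `P(t)` is `d`, every column
of `P(t)` is constant up to relative error `d`, so `|x(t)_j - x_ave| ≤ d · ∑ |x(0)_i| / N`.

Primitivity of `∑ pᵢ Kᵢ` gives a word `w` in the indices whose matrix product is positive.
Cutting time into blocks of length `|w|`, the blocks in which `K(t)` spells `w` are independent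
events of probability `∏ p_{w_l} > 0`, so their number tends to infinity in probability. Hence
the error tends to `0` in probability and, being bounded, in mean.
-/

section WeightedAverage

variable {ι : Type*} [Fintype ι] {r a : ι → ℝ} {c : ℝ}

lemma sum_mul_div_sum_le (ha : ∀ k, 0 ≤ a k) (hsa : 0 < ∑ k, a k) (hr : ∀ k, r k ≤ c) :
    (∑ k, r k * a k) / ∑ k, a k ≤ c := by
  rw [div_le_iff₀ hsa, Finset.mul_sum]
  exact Finset.sum_le_sum fun k _ => mul_le_mul_of_nonneg_right (hr k) (ha k)

lemma le_sum_mul_div_sum (ha : ∀ k, 0 ≤ a k) (hsa : 0 < ∑ k, a k) (hr : ∀ k, c ≤ r k) :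
    c ≤ (∑ k, r k * a k) / ∑ k, a k := by
  rw [le_div_iff₀ hsa, Finset.mul_sum]
  exact Finset.sum_le_sum fun k _ => mul_le_mul_of_nonneg_right (hr k) (ha k)

lemma sum_mul_mul_div_sum_le {b : ι → ℝ} {ε : ℝ} (ha : ∀ k, 0 ≤ a k)
    (hsab : 0 < ∑ k, a k * b k) (hε : 0 ≤ ε) (hεb : ∀ k, ε ≤ b k) (hb1 : ∀ k, b k ≤ 1)
    (hr : ∀ k, r k ≤ c) :
    (∑ k, r k * (a k * b k)) / ∑ k, a k * b k
      ≤ (1 - ε) * c + ε * ((∑ k, r k * a k) / ∑ k, a k) := by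
  have hab : ∑ k, a k * b k ≤ ∑ k, a k :=
    Finset.sum_le_sum fun k _ => mul_le_of_le_one_right (ha k) (hb1 k)
  have hsa := hsab.trans_le hab
  set m := (∑ k, r k * a k) / ∑ k, a k
  have hm : m ≤ c := sum_mul_div_sum_le ha hsa hr
  have hsum : ∑ k, r k * a k = m * ∑ k, a k := (div_mul_cancel₀ _ hsa.ne').symm
  have key : ε * (c * ∑ k, a k - ∑ k, r k * a k)
      ≤ c * ∑ k, a k * b k - ∑ k, r k * (a k * b k) := by
    rw [Finset.mul_sum, Finset.mul_sum, ← Finset.sum_sub_distrib, Finset.mul_sum,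
      ← Finset.sum_sub_distrib]
    refine Finset.sum_le_sum fun k _ => ?_
    have : 0 ≤ (c - r k) * a k := mul_nonneg (sub_nonneg.2 (hr k)) (ha k)
    nlinarith [mul_le_mul_of_nonneg_left (hεb k) this]
  rw [div_le_iff₀ hsab]
  rw [hsum] at key
  nlinarith [mul_le_mul_of_nonneg_left hab (mul_nonneg hε (sub_nonneg.2 hm))]

lemma le_sum_mul_mul_div_sum {b : ι → ℝ} {ε : ℝ} (ha : ∀ k, 0 ≤ a k)
    (hsab : 0 < ∑ k, a k * b k) (hε : 0 ≤ ε) (hεb : ∀ k, ε ≤ b k) (hb1 : ∀ k, b k ≤ 1)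
    (hr : ∀ k, c ≤ r k) :
    (1 - ε) * c + ε * ((∑ k, r k * a k) / ∑ k, a k)
      ≤ (∑ k, r k * (a k * b k)) / ∑ k, a k * b k := by
  have := sum_mul_mul_div_sum_le (r := fun k => -r k) (c := -c) ha hsab hε hεb hb1
    fun k => neg_le_neg (hr k)
  simp only [neg_mul, Finset.sum_neg_distrib, neg_div] at this
  linarith

lemma sum_sq_le_card_mul_sq {f : ι → ℝ} {c : ℝ} (hf : ∀ j, |f j| ≤ c) :
    ∑ j, f j ^ 2 ≤ Fintype.card ι * c ^ 2 := by
  simpa using Finset.sum_le_card_nsmul Finset.univ _ _ fun j _ =>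
    sq_le_sq' (abs_le.1 (hf j)).1 (abs_le.1 (hf j)).2

end WeightedAverage

namespace Matrix

variable {n : Type*}

structure RatioSpreadLE (P : Matrix n n ℝ) (d : ℝ) : Prop where
  pos : ∀ i j, 0 < P i j
  div_sub_div_le : ∀ i i' j j', P i j / P i' j - P i j' / P i' j' ≤ d

lemma RatioSpreadLE.mono {P : Matrix n n ℝ} {d d' : ℝ} (h : RatioSpreadLE P d) (hd : d ≤ d') :
    RatioSpreadLE P d' :=
  ⟨h.pos, fun i i' j j' => (h.div_sub_div_le i i' j j').trans hd⟩

variable [Fintype n]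

lemma le_mul_apply_of_nonneg {A B : Matrix n n ℝ} (hA : ∀ i j, 0 ≤ A i j) (hB : ∀ i j, 0 ≤ B i j)
    (i k j : n) : A i k * B k j ≤ (A * B) i j :=
  Finset.single_le_sum (f := fun l => A i l * B l j) (fun l _ => mul_nonneg (hA i l) (hB l j))
    (Finset.mem_univ k)

lemma exists_pos_of_mul_apply_pos {A B : Matrix n n ℝ} (hA : ∀ i j, 0 ≤ A i j)
    (hB : ∀ i j, 0 ≤ B i j) {i j : n} (h : 0 < (A * B) i j) : ∃ k, 0 < A i k ∧ 0 < B k j := by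
  obtain ⟨k, -, hk⟩ := (Finset.sum_pos_iff_of_nonneg fun k _ => mul_nonneg (hA i k) (hB k j)).1 h
  exact ⟨k, (pos_and_pos_or_neg_and_neg_of_mul_pos hk).resolve_right
    fun h => (h.1.not_ge (hA i k)).elim⟩

lemma mul_apply_pos {P Q : Matrix n n ℝ} (hP : ∀ i j, 0 < P i j) (hQ : ∀ i j, 0 ≤ Q i j)
    (hQd : ∀ j, 0 < Q j j) (i j : n) : 0 < (P * Q) i j :=
  (mul_pos (hP i j) (hQd j)).trans_le (le_mul_apply_of_nonneg (fun i j => (hP i j).le) hQ i j j)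

lemma mul_apply_div_mul_apply {P Q : Matrix n n ℝ} {i' : n} (hP : ∀ k, 0 < P i' k) (i j : n) :
    (P * Q) i j / (P * Q) i' j
      = (∑ k, P i k / P i' k * (P i' k * Q k j)) / ∑ k, P i' k * Q k j := by
  congr 1
  exact Finset.sum_congr rfl fun k _ => by field_simp [(hP k).ne']

lemma RatioSpreadLE.exists_ratio_bounds {P : Matrix n n ℝ} {d : ℝ} (h : RatioSpreadLE P d)
    (i i' : n) [Nonempty n] :
    ∃ lo hi, hi - lo ≤ d ∧ ∀ k, lo ≤ P i k / P i' k ∧ P i k / P i' k ≤ hi := by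
  obtain ⟨kmax, hkmax⟩ := Finite.exists_max fun k => P i k / P i' k
  obtain ⟨kmin, hkmin⟩ := Finite.exists_min fun k => P i k / P i' k
  exact ⟨_, _, h.div_sub_div_le i i' kmax kmin, fun k => ⟨hkmin k, hkmax k⟩⟩

-- the estimate `x(t) = s(t) / w(t)` of the paper is `colWeightedAvg P(t) x(0)`
noncomputable def colWeightedAvg (P : Matrix n n ℝ) (x : n → ℝ) (j : n) : ℝ :=
  (∑ i, P i j * x i) / ∑ i, P i j

lemma measurable_colWeightedAvg {Ω : Type*} [MeasurableSpace Ω] {P : Ω → Matrix n n ℝ}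
    (hP : ∀ i j, Measurable fun ω => P ω i j) (x : n → ℝ) (j : n) :
    Measurable fun ω => colWeightedAvg (P ω) x j :=
  (Finset.measurable_sum _ fun i _ => (hP i j).mul_const _).div
    (Finset.measurable_sum _ fun i _ => hP i j)

lemma abs_colWeightedAvg_sub_avg_le {P : Matrix n n ℝ} (hP : ∀ i j, 0 ≤ P i j) (x : n → ℝ)
    (j : n) (hw : 0 < ∑ i, P i j) :
    |colWeightedAvg P x j - (Fintype.card n : ℝ)⁻¹ * ∑ i, x i| ≤ 2 * ∑ i, |x i| := by
  have hcard : (1 : ℝ) ≤ Fintype.card n := by exact_mod_cast Fintype.card_pos_iff.2 ⟨j⟩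
  have havg : |colWeightedAvg P x j| ≤ ∑ i, |x i| := by
    rw [colWeightedAvg, abs_div, abs_of_pos hw, div_le_iff₀ hw, Finset.sum_mul]
    refine (Finset.abs_sum_le_sum_abs _ _).trans (Finset.sum_le_sum fun i _ => ?_)
    rw [abs_mul, abs_of_nonneg (hP i j), mul_comm]
    exact mul_le_mul_of_nonneg_left
      (Finset.single_le_sum (fun k _ => hP k j) (Finset.mem_univ i)) (abs_nonneg _)
  have hmean : |(Fintype.card n : ℝ)⁻¹ * ∑ i, x i| ≤ ∑ i, |x i| := by
    rw [abs_mul, abs_of_pos (by positivity)]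
    exact (mul_le_of_le_one_left (abs_nonneg _) (inv_le_one_of_one_le₀ hcard)).trans
      (Finset.abs_sum_le_sum_abs _ _)
  linarith [abs_sub _ _ |>.trans (add_le_add havg hmean)]

variable [DecidableEq n]

variable (n) in
def rowStochasticPosDiag : Submonoid (Matrix n n ℝ) where
  carrier := {A | A ∈ rowStochastic ℝ n ∧ ∀ i, 0 < A i i}
  mul_mem' {A B} hA hB := ⟨mul_mem hA.1 hB.1, fun i =>
    (mul_pos (hA.2 i) (hB.2 i)).trans_le (le_mul_apply_of_nonneg hA.1.1 hB.1.1 i i i)⟩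
  one_mem' := ⟨one_mem _, fun i => by simp⟩

lemma list_prod_apply_pos_of_mem {l : List (Matrix n n ℝ)}
    (hl : ∀ A ∈ l, A ∈ rowStochasticPosDiag n) {A : Matrix n n ℝ} (hA : A ∈ l) {i j : n}
    (hAij : 0 < A i j) : 0 < l.prod i j := by
  induction l with
  | nil => simp at hA
  | cons B l ih =>
    have hB := hl B List.mem_cons_self
    have hl' : ∀ C ∈ l, C ∈ rowStochasticPosDiag n := fun C hC => hl C (List.mem_cons_of_mem B hC)
    have hprod := Submonoid.list_prod_mem _ hl'
    rw [List.prod_cons]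
    rcases List.mem_cons.1 hA with rfl | hA
    · exact (mul_pos hAij (hprod.2 j)).trans_le (le_mul_apply_of_nonneg hB.1.1 hprod.1.1 i j j)
    · exact (mul_pos (hB.2 i) (ih hl' hA)).trans_le (le_mul_apply_of_nonneg hB.1.1 hprod.1.1 i i j)

lemma sum_sq_colWeightedAvg_sub_avg_le {P : Matrix n n ℝ} (hP : P ∈ rowStochasticPosDiag n)
    (x : n → ℝ) :
    ∑ j, (colWeightedAvg P x j - (Fintype.card n : ℝ)⁻¹ * ∑ i, x i) ^ 2
      ≤ Fintype.card n * (2 * ∑ i, |x i|) ^ 2 :=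
  sum_sq_le_card_mul_sq fun j => abs_colWeightedAvg_sub_avg_le hP.1.1 x j
    ((hP.2 j).trans_le (Finset.single_le_sum (fun i _ => hP.1.1 i j) (Finset.mem_univ j)))

section Words

variable {α : Type*} [Fintype α] {K : α → Matrix n n ℝ} {p : α → ℝ}

lemma exists_list_length_eq_prod_apply_pos (hK : ∀ a, K a ∈ rowStochastic ℝ n)
    (hp : ∀ a, 0 ≤ p a) {m : ℕ} {i j : n} (h : 0 < ((∑ a, p a • K a) ^ m) i j) :
    ∃ l : List α, l.length = m ∧ 0 < (l.map K).prod i j := by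
  set T := ∑ a, p a • K a
  have hT : ∀ i j, 0 ≤ T i j := fun i j => by
    simp only [T, sum_apply, smul_apply, smul_eq_mul]
    exact Finset.sum_nonneg fun a _ => mul_nonneg (hp a) ((hK a).1 i j)
  have hTpow : ∀ m i j, 0 ≤ (T ^ m) i j := by
    intro m
    induction m with
    | zero => intro i j; by_cases h : i = j <;> simp [h]
    | succ m ih =>
      intro i j
      rw [pow_succ]
      exact Finset.sum_nonneg fun k _ => mul_nonneg (ih i k) (hT k j)
  induction m generalizing i with
  | zero => exact ⟨[], rfl, by simpa using h⟩
  | succ m ih =>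
    rw [pow_succ'] at h
    obtain ⟨k, hik, hkj⟩ := exists_pos_of_mul_apply_pos hT (hTpow m) h
    obtain ⟨a, -, ha⟩ := (Finset.sum_pos_iff_of_nonneg fun a _ =>
      mul_nonneg (hp a) ((hK a).1 i k)).1 (by simpa [T, sum_apply] using hik)
    obtain ⟨l, hl, hlpos⟩ := ih hkj
    refine ⟨a :: l, by simp [hl], ?_⟩
    rw [List.map_cons, List.prod_cons]
    have hprod : (l.map K).prod ∈ rowStochastic ℝ n :=
      Submonoid.list_prod_mem _ (by simpa using fun a _ => hK a)
    exact (mul_pos (pos_of_mul_pos_right ha (hp a)) hlpos).trans_le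
      (le_mul_apply_of_nonneg (hK a).1 hprod.1 i k j)

lemma exists_list_prod_pos [Nonempty n] (hK : ∀ a, K a ∈ rowStochasticPosDiag n)
    (hp : ∀ a, 0 ≤ p a) (hprim : _root_.IsPrimitive (∑ a, p a • K a)) :
    ∃ l : List α, l ≠ [] ∧ ∀ i j, 0 < (l.map K).prod i j := by
  obtain ⟨m, hm, hpos⟩ := hprim
  choose word hlen hword using fun ij : n × n =>
    exists_list_length_eq_prod_apply_pos (i := ij.1) (j := ij.2) (fun a => (hK a).1) hp
      (hpos ij.1 ij.2)
  have hmem : ∀ A ∈ (Finset.univ.toList).map (fun ij => ((word ij).map K).prod),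
      A ∈ rowStochasticPosDiag n := by
    simp only [List.mem_map, forall_exists_index, and_imp, forall_apply_eq_imp_iff₂]
    exact fun ij _ => Submonoid.list_prod_mem _ (by simpa using fun a _ => hK a)
  refine ⟨(Finset.univ.toList).flatMap word, ?_, fun i j => ?_⟩
  · obtain ⟨i⟩ := ‹Nonempty n›
    obtain ⟨a, ha⟩ := List.exists_mem_of_length_pos (hm.trans_eq (hlen (i, i)).symm)
    exact List.ne_nil_of_mem (List.mem_flatMap.2 ⟨(i, i), by simp, ha⟩)
  · rw [List.map_flatMap, List.flatMap_def, List.prod_flatten, List.map_map]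
    exact list_prod_apply_pos_of_mem hmem (List.mem_map.2 ⟨(i, j), by simp, rfl⟩) (hword (i, j))

end Words

namespace RatioSpreadLE

variable {P Q : Matrix n n ℝ} {d ε : ℝ}

lemma mul (h : RatioSpreadLE P d) (hQ : Q ∈ rowStochasticPosDiag n) :
    RatioSpreadLE (P * Q) d := by
  refine ⟨mul_apply_pos h.pos hQ.1.1 hQ.2, fun i i' j j' => ?_⟩
  have : Nonempty n := ⟨j⟩
  obtain ⟨lo, hi, hd, hr⟩ := h.exists_ratio_bounds i i'
  have ha : ∀ j k, 0 ≤ P i' k * Q k j := fun j k => mul_nonneg (h.pos i' k).le (hQ.1.1 k j)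
  have hsa : ∀ j, 0 < ∑ k, P i' k * Q k j := fun j => mul_apply_pos h.pos hQ.1.1 hQ.2 i' j
  rw [mul_apply_div_mul_apply (h.pos i') i j, mul_apply_div_mul_apply (h.pos i') i j']
  linarith [sum_mul_div_sum_le (ha j) (hsa j) fun k => (hr k).2,
    le_sum_mul_div_sum (ha j') (hsa j') fun k => (hr k).1]

lemma mul_of_le (h : RatioSpreadLE P d) (hQ : Q ∈ rowStochastic ℝ n) (hε : 0 < ε)
    (hQε : ∀ i j, ε ≤ Q i j) : RatioSpreadLE (P * Q) ((1 - ε) * d) := by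
  have hQd : ∀ j, 0 < Q j j := fun j => hε.trans_le (hQε j j)
  refine ⟨mul_apply_pos h.pos hQ.1 hQd, fun i i' j j' => ?_⟩
  have : Nonempty n := ⟨j⟩
  obtain ⟨lo, hi, hd, hr⟩ := h.exists_ratio_bounds i i'
  have hv : ∀ k, 0 ≤ P i' k := fun k => (h.pos i' k).le
  have hsa : ∀ j, 0 < ∑ k, P i' k * Q k j := fun j => mul_apply_pos h.pos hQ.1 hQd i' j
  have hε1 : ε ≤ 1 := (hQε j j).trans (le_one_of_mem_rowStochastic hQ)
  rw [mul_apply_div_mul_apply (h.pos i') i j, mul_apply_div_mul_apply (h.pos i') i j']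
  have hup := sum_mul_mul_div_sum_le hv (hsa j) hε.le (fun k => hQε k j)
    (fun k => le_one_of_mem_rowStochastic hQ) fun k => (hr k).2
  have hlo := le_sum_mul_mul_div_sum hv (hsa j') hε.le (fun k => hQε k j')
    (fun k => le_one_of_mem_rowStochastic hQ) fun k => (hr k).1
  nlinarith [mul_le_mul_of_nonneg_left hd (sub_nonneg.2 hε1)]

open scoped Classical in
lemma mul_list_prod (hε : 0 < ε) {l : List (Matrix n n ℝ)}
    (hl : ∀ A ∈ l, A ∈ rowStochasticPosDiag n) (h : RatioSpreadLE P d) :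
    RatioSpreadLE (P * l.prod)
      ((1 - ε) ^ l.countP (fun A : Matrix n n ℝ => decide (∀ i j, ε ≤ A i j)) * d) := by
  induction l generalizing P d with
  | nil => simpa using h
  | cons A l ih =>
    have hA := hl A List.mem_cons_self
    have hl' : ∀ B ∈ l, B ∈ rowStochasticPosDiag n := fun B hB => hl B (List.mem_cons_of_mem A hB)
    rw [List.prod_cons, ← mul_assoc, List.countP_cons]
    by_cases hgood : ∀ i j, ε ≤ A i j
    · simpa [hgood, pow_succ, mul_assoc] using ih hl' (h.mul_of_le hA.1 hε hgood)
    · simpa [hgood] using ih hl' (h.mul hA)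

lemma abs_sub_le (h : RatioSpreadLE P d) (hP : P ∈ rowStochastic ℝ n) (i i' j : n) :
    |P i j - P i' j| ≤ d * P i' j := by
  have : Nonempty n := ⟨j⟩
  obtain ⟨lo, hi, hd, hr⟩ := h.exists_ratio_bounds i i'
  have hv : ∀ k, 0 ≤ P i' k := fun k => (h.pos i' k).le
  have hsv : 0 < ∑ k, P i' k := by simp [sum_row_of_mem_rowStochastic hP]
  -- the ratios `P i k / P i' k` average to `1` under the weights `P i' k`
  have hone : (∑ k, P i k / P i' k * P i' k) / ∑ k, P i' k = 1 := by
    simp [div_mul_cancel₀ _ (h.pos i' _).ne', sum_row_of_mem_rowStochastic hP]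
  have hlo := le_sum_mul_div_sum hv hsv fun k => (hr k).1
  have hhi := sum_mul_div_sum_le hv hsv fun k => (hr k).2
  rw [hone] at hlo hhi
  have hdiff : P i j - P i' j = (P i j / P i' j - 1) * P i' j := by
    field_simp [(h.pos i' j).ne']
  rw [hdiff, abs_mul, abs_of_pos (h.pos i' j)]
  exact mul_le_mul_of_nonneg_right
    (abs_le.2 ⟨by linarith [(hr j).1], by linarith [(hr j).2]⟩) (h.pos i' j).le

lemma abs_colWeightedAvg_sub_avg_le (h : RatioSpreadLE P d) (hP : P ∈ rowStochastic ℝ n)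
    (x : n → ℝ) (j : n) :
    |colWeightedAvg P x j - (Fintype.card n : ℝ)⁻¹ * ∑ i, x i|
      ≤ d / Fintype.card n * ∑ i, |x i| := by
  have hN : (0 : ℝ) < Fintype.card n := by exact_mod_cast Fintype.card_pos_iff.2 ⟨j⟩
  set w := ∑ i, P i j
  have hw : 0 < w := Finset.sum_pos (fun i _ => h.pos i j) ⟨j, Finset.mem_univ j⟩
  have hcoef : ∀ i, |P i j / w - (Fintype.card n : ℝ)⁻¹| ≤ d / Fintype.card n := by
    intro i
    have hsum : (Fintype.card n : ℝ) * P i j - w = ∑ i', (P i j - P i' j) := by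
      simp [w, Finset.sum_sub_distrib]
    have habs : |(Fintype.card n : ℝ) * P i j - w| ≤ d * w := by
      rw [hsum, Finset.mul_sum]
      exact (Finset.abs_sum_le_sum_abs _ _).trans
        (Finset.sum_le_sum fun i' _ => h.abs_sub_le hP i i' j)
    rw [show P i j / w - (Fintype.card n : ℝ)⁻¹
        = ((Fintype.card n : ℝ) * P i j - w) / (Fintype.card n * w) by field_simp,
      abs_div, abs_of_pos (mul_pos hN hw), div_le_div_iff₀ (mul_pos hN hw) hN]
    nlinarith
  have hsplit : colWeightedAvg P x j - (Fintype.card n : ℝ)⁻¹ * ∑ i, x i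
      = ∑ i, (P i j / w - (Fintype.card n : ℝ)⁻¹) * x i := by
    simp only [colWeightedAvg, sub_mul, Finset.sum_sub_distrib, Finset.sum_div, Finset.mul_sum]
    congr 1
    exact Finset.sum_congr rfl fun i _ => by ring
  rw [hsplit, Finset.mul_sum]
  refine (Finset.abs_sum_le_sum_abs _ _).trans (Finset.sum_le_sum fun i _ => ?_)
  rw [abs_mul]
  exact mul_le_mul_of_nonneg_right (hcoef i) (abs_nonneg _)

lemma sum_sq_colWeightedAvg_sub_avg_le (h : RatioSpreadLE P d) (hP : P ∈ rowStochastic ℝ n)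
    (x : n → ℝ) :
    ∑ j, (colWeightedAvg P x j - (Fintype.card n : ℝ)⁻¹ * ∑ i, x i) ^ 2
      ≤ (d * ∑ i, |x i|) ^ 2 := by
  rcases isEmpty_or_nonempty n with hn | ⟨⟨j⟩⟩
  · simp
  have hN : (1 : ℝ) ≤ Fintype.card n := by exact_mod_cast Fintype.card_pos_iff.2 ⟨j⟩
  calc _ ≤ Fintype.card n * (d / Fintype.card n * ∑ i, |x i|) ^ 2 :=
        sum_sq_le_card_mul_sq (h.abs_colWeightedAvg_sub_avg_le hP x)
    _ = (d * ∑ i, |x i|) ^ 2 / Fintype.card n := by field_simp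
    _ ≤ (d * ∑ i, |x i|) ^ 2 := div_le_self (sq_nonneg _) hN

end RatioSpreadLE

variable {ε : ℝ}

lemma ratioSpreadLE_rowStochastic_mul {U B : Matrix n n ℝ} (hU : U ∈ rowStochastic ℝ n)
    (hB : B ∈ rowStochastic ℝ n) (hε : 0 < ε) (hBε : ∀ i j, ε ≤ B i j) :
    RatioSpreadLE (U * B) ε⁻¹ := by
  have hlow : ∀ i j, ε ≤ (U * B) i j := fun i j =>
    calc ε = ∑ k, U i k * ε := by rw [← Finset.sum_mul, sum_row_of_mem_rowStochastic hU, one_mul]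
      _ ≤ (U * B) i j :=
        Finset.sum_le_sum fun k _ => mul_le_mul_of_nonneg_left (hBε k j) (hU.1 i k)
  refine ⟨fun i j => hε.trans_le (hlow i j), fun i i' j j' => ?_⟩
  have h1 : (U * B) i j / (U * B) i' j ≤ ε⁻¹ := by
    simpa using div_le_div₀ zero_le_one (le_one_of_mem_rowStochastic (mul_mem hU hB)) hε (hlow i' j)
  have h2 : 0 ≤ (U * B) i j' / (U * B) i' j' :=
    div_nonneg (hε.le.trans (hlow i j')) (hε.le.trans (hlow i' j'))
  linarith

open scoped Classical in
lemma ratioSpreadLE_mul_list_prod_of_countP_pos (hε : 0 < ε) {l : List (Matrix n n ℝ)}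
    (hl : ∀ A ∈ l, A ∈ rowStochasticPosDiag n) {U : Matrix n n ℝ}
    (hU : U ∈ rowStochasticPosDiag n)
    (hc : 0 < l.countP (fun A : Matrix n n ℝ => decide (∀ i j, ε ≤ A i j))) :
    RatioSpreadLE (U * l.prod)
      ((1 - ε) ^ (l.countP (fun A : Matrix n n ℝ => decide (∀ i j, ε ≤ A i j)) - 1) * ε⁻¹) := by
  induction l generalizing U with
  | nil => simp at hc
  | cons A l ih =>
    have hA := hl A List.mem_cons_self
    have hl' : ∀ B ∈ l, B ∈ rowStochasticPosDiag n := fun B hB => hl B (List.mem_cons_of_mem A hB)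
    rw [List.prod_cons, ← mul_assoc]
    rw [List.countP_cons] at hc ⊢
    by_cases hgood : ∀ i j, ε ≤ A i j
    · simpa [hgood] using
        (ratioSpreadLE_rowStochastic_mul hU.1 hA.1 hε hgood).mul_list_prod hε hl'
    · simp only [hgood, decide_false, Bool.false_eq_true, if_false, add_zero] at hc ⊢
      exact ih hl' (mul_mem hU hA) hc

end Matrix

lemma List.prod_map_range_mul_eq_prod_blocks {α : Type*} [Monoid α] (f : ℕ → α) (L n : ℕ) :
    ((List.range (n * L)).map f).prod
      = ((List.range n).map fun b => ((List.range L).map fun l => f (b * L + l)).prod).prod := by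
  induction n with
  | zero => simp
  | succ n ih =>
    rw [add_mul, one_mul, List.range_add, List.map_append, List.prod_append, ih, List.map_map,
      List.range_succ, List.map_append, List.prod_append]
    simp [Function.comp_def]

lemma List.le_countP_range_mul {p : ℕ → Bool} {g s : ℕ}
    (h : ∀ j < g, ∃ b, j * s ≤ b ∧ b < (j + 1) * s ∧ p b) :
    g ≤ (List.range (g * s)).countP p := by
  induction g with
  | zero => simp
  | succ g ih =>
    obtain ⟨b, hb1, hb2, hpb⟩ := h g (Nat.lt_succ_self g)
    have hpos : 0 < ((List.range s).map (g * s + ·)).countP p :=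
      List.countP_pos_iff.2 ⟨b, List.mem_map.2 ⟨b - g * s, List.mem_range.2 (by
        rw [add_mul, one_mul] at hb2; omega), by omega⟩, hpb⟩
    rw [add_mul, one_mul, List.range_add, List.countP_append]
    have := ih fun j hj => h j (Nat.lt_succ_of_lt hj)
    omega

lemma ProbabilityTheory.iIndepSet.measure_biInter_compl {Ω ι : Type*} [MeasurableSpace Ω]
    {μ : Measure Ω} {s : ι → Set Ω} (h : iIndepSet s μ) (S : Finset ι) :
    μ (⋂ i ∈ S, (s i)ᶜ) = ∏ i ∈ S, μ (s i)ᶜ :=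
  (iIndepSet_iff s μ).1 h S fun _ _ =>
    (MeasurableSpace.measurableSet_generateFrom (Set.mem_singleton _)).compl

section Blocks

open ProbabilityTheory

variable {Ω α : Type*} {ι : ℕ → Ω → α} {L : ℕ} {w : ℕ → α}

/-- Block `b` covers the times `b * L + 1, …, b * L + L`; the sequence `K(t)` starts at
`t = 1`. -/
def blockMatch (ι : ℕ → Ω → α) (L : ℕ) (w : ℕ → α) (b : ℕ) : Set Ω :=
  {ω | ∀ l < L, ι (b * L + l + 1) ω = w l}

open scoped Classical in
noncomputable def matchCount (ι : ℕ → Ω → α) (L : ℕ) (w : ℕ → α) (n : ℕ) (ω : Ω) : ℕ :=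
  (List.range n).countP fun b => decide (ω ∈ blockMatch ι L w b)

lemma matchCount_mono {m n : ℕ} (h : m ≤ n) (ω : Ω) :
    matchCount ι L w m ω ≤ matchCount ι L w n ω :=
  (List.range_sublist.2 h).countP_le

variable [MeasurableSpace Ω] {μ : Measure Ω} {ν : α → ENNReal}

lemma measure_biInter_blockMatch
    (hiid : ∀ (s : Finset ℕ) (g : ℕ → α), μ {ω | ∀ t ∈ s, ι t ω = g t} = ∏ t ∈ s, ν (g t))
    (S : Finset ℕ) :
    μ (⋂ b ∈ S, blockMatch ι L w b) = (∏ l ∈ Finset.range L, ν (w l)) ^ S.card := by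
  have decode : ∀ {b l}, l < L → (b * L + l) / L = b ∧ (b * L + l) % L = l := fun hl =>
    (Nat.div_mod_unique (by omega)).2 ⟨by ring, hl⟩
  set e : ℕ × ℕ → ℕ := fun bl => bl.1 * L + bl.2 + 1
  set g : ℕ → α := fun t => w ((t - 1) % L)
  have hg : ∀ {b l}, l < L → g (e (b, l)) = w l := fun hl => by
    simp only [g, e, Nat.add_sub_cancel, (decode hl).2]
  have hinj : Set.InjOn e ↑(S ×ˢ Finset.range L) := by
    rintro ⟨b, l⟩ hbl ⟨b', l'⟩ hbl' heq
    simp only [Finset.coe_product, Set.mem_prod, Finset.mem_coe, Finset.mem_range] at hbl hbl'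
    have heq' : b * L + l = b' * L + l' := by simpa [e] using heq
    have h1 := decode (b := b) hbl.2
    have h2 := decode (b := b') hbl'.2
    rw [heq'] at h1
    exact Prod.ext (h1.1.symm.trans h2.1) (h1.2.symm.trans h2.2)
  have hset : ⋂ b ∈ S, blockMatch ι L w b
      = {ω | ∀ t ∈ (S ×ˢ Finset.range L).image e, ι t ω = g t} := by
    ext ω
    simp only [Set.mem_iInter, blockMatch, Set.mem_ofPred_eq, Finset.mem_image,
      Finset.mem_product, Finset.mem_range]
    constructor
    · rintro h _ ⟨⟨b, l⟩, ⟨hb, hl⟩, rfl⟩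
      rw [hg hl]
      exact h b hb l hl
    · intro h b hb l hl
      rw [← hg hl]
      exact h _ ⟨(b, l), ⟨hb, hl⟩, rfl⟩
  rw [hset, hiid, Finset.prod_image hinj, Finset.prod_product, ← Finset.prod_const]
  exact Finset.prod_congr rfl fun b _ => Finset.prod_congr rfl fun l hl =>
    congrArg ν (hg (Finset.mem_range.1 hl))

variable [MeasurableSpace α] [MeasurableSingletonClass α]

lemma measurableSet_blockMatch (hι : ∀ t, Measurable (ι t)) (b : ℕ) :
    MeasurableSet (blockMatch ι L w b) := by
  simp only [blockMatch, Set.ofPred_forall]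
  exact .iInter fun l => .iInter fun _ => hι _ (measurableSet_singleton (w l))

variable [IsProbabilityMeasure μ]

lemma measure_biInter_compl_blockMatch (hι : ∀ t, Measurable (ι t))
    (hiid : ∀ (s : Finset ℕ) (g : ℕ → α), μ {ω | ∀ t ∈ s, ι t ω = g t} = ∏ t ∈ s, ν (g t))
    (S : Finset ℕ) :
    μ (⋂ b ∈ S, (blockMatch ι L w b)ᶜ) = (1 - ∏ l ∈ Finset.range L, ν (w l)) ^ S.card := by
  have hone : ∀ b, μ (blockMatch ι L w b) = ∏ l ∈ Finset.range L, ν (w l) := fun b => by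
    simpa using measure_biInter_blockMatch hiid {b}
  have hindep : iIndepSet (blockMatch ι L w) μ :=
    (iIndepSet_iff_meas_biInter (measurableSet_blockMatch hι)).2 fun S => by
      rw [measure_biInter_blockMatch hiid, Finset.prod_congr rfl fun b _ => hone b,
        Finset.prod_const]
  rw [hindep.measure_biInter_compl, ← Finset.prod_const]
  exact Finset.prod_congr rfl fun b _ => by
    rw [prob_compl_eq_one_sub (measurableSet_blockMatch hι b), hone]

lemma measure_matchCount_lt_le (hι : ∀ t, Measurable (ι t))
    (hiid : ∀ (s : Finset ℕ) (g : ℕ → α), μ {ω | ∀ t ∈ s, ι t ω = g t} = ∏ t ∈ s, ν (g t))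
    (g s : ℕ) :
    μ {ω | matchCount ι L w (g * s) ω < g} ≤ g * (1 - ∏ l ∈ Finset.range L, ν (w l)) ^ s := by
  classical
  -- fewer than `g` matches among `g` runs of `s` blocks leaves a run without any match
  have hsub : {ω | matchCount ι L w (g * s) ω < g}
      ⊆ ⋃ j ∈ Finset.range g, ⋂ b ∈ Finset.Ico (j * s) ((j + 1) * s), (blockMatch ι L w b)ᶜ := by
    intro ω hω
    by_contra hmiss
    simp only [Set.mem_iUnion, Set.mem_iInter, Set.mem_compl_iff, Finset.mem_range,
      Finset.mem_Ico, not_exists, not_forall, not_not] at hmiss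
    refine (Set.mem_ofPred_eq ▸ hω).not_ge (List.le_countP_range_mul fun j hj => ?_)
    obtain ⟨b, ⟨hb1, hb2⟩, hb⟩ := hmiss j hj
    exact ⟨b, hb1, hb2, by simpa using hb⟩
  calc _ ≤ _ := measure_mono hsub
    _ ≤ _ := measure_biUnion_finset_le _ _
    _ = ∑ _j ∈ Finset.range g, (1 - ∏ l ∈ Finset.range L, ν (w l)) ^ s := by
      refine Finset.sum_congr rfl fun j _ => ?_
      rw [measure_biInter_compl_blockMatch hι hiid, Nat.card_Ico, add_mul, one_mul,
        Nat.add_sub_cancel_left]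
    _ = _ := by simp

lemma tendsto_measure_matchCount_lt (hι : ∀ t, Measurable (ι t))
    (hiid : ∀ (s : Finset ℕ) (g : ℕ → α), μ {ω | ∀ t ∈ s, ι t ω = g t} = ∏ t ∈ s, ν (g t))
    (hq : ∏ l ∈ Finset.range L, ν (w l) ≠ 0) (g : ℕ) :
    Tendsto (fun n => μ {ω | matchCount ι L w n ω < g}) atTop (nhds 0) := by
  have hlt : 1 - ∏ l ∈ Finset.range L, ν (w l) < 1 :=
    ENNReal.sub_lt_self ENNReal.one_ne_top one_ne_zero hq
  have hgeom : Tendsto (fun s => (g : ENNReal) * (1 - ∏ l ∈ Finset.range L, ν (w l)) ^ s)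
      atTop (nhds 0) := by
    simpa using ENNReal.Tendsto.const_mul (ENNReal.tendsto_pow_atTop_nhds_zero_of_lt_one hlt)
      (Or.inr (ENNReal.natCast_ne_top g))
  rw [ENNReal.tendsto_nhds_zero]
  intro η hη
  obtain ⟨s, hs⟩ := (hgeom.eventually (gt_mem_nhds hη)).exists
  filter_upwards [eventually_ge_atTop (g * s)] with n hn
  calc _ ≤ μ {ω | matchCount ι L w (g * s) ω < g} :=
        measure_mono fun ω (hω : matchCount ι L w n ω < g) => (matchCount_mono hn ω).trans_lt hω
    _ ≤ _ := measure_matchCount_lt_le hι hiid g s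
    _ ≤ η := hs.le

end Blocks

section BoundedConvergence

variable {Ω : Type*} [MeasurableSpace Ω] {μ : Measure Ω} [IsFiniteMeasure μ]

lemma integral_le_mul_measureReal_add {Y : Ω → ℝ} {C δ : ℝ} (hY : Measurable Y)
    (h0 : ∀ ω, 0 ≤ Y ω) (hC : ∀ ω, Y ω ≤ C) (hδ : 0 ≤ δ) :
    ∫ ω, Y ω ∂μ ≤ C * μ.real {ω | δ < Y ω} + δ * μ.real Set.univ := by
  have hA : MeasurableSet {ω | δ < Y ω} := measurableSet_lt measurable_const hY
  have hint : Integrable (fun ω => {ω | δ < Y ω}.indicator (fun _ => C) ω + δ) μ :=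
    ((integrable_const C).indicator hA).add (integrable_const δ)
  calc ∫ ω, Y ω ∂μ ≤ ∫ ω, ({ω | δ < Y ω}.indicator (fun _ => C) ω + δ) ∂μ := by
        refine integral_mono_of_nonneg (.of_forall h0) hint (.of_forall fun ω => ?_)
        dsimp only
        by_cases hω : δ < Y ω
        · rw [Set.indicator_of_mem (show ω ∈ {ω | δ < Y ω} from hω)]
          linarith [hC ω]
        · rw [Set.indicator_of_notMem (show ω ∉ {ω | δ < Y ω} from hω)]
          linarith [not_lt.1 hω]
    _ = _ := by
      rw [integral_add ((integrable_const C).indicator hA) (integrable_const δ),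
        integral_indicator_const _ hA, integral_const, smul_eq_mul, smul_eq_mul]
      ring

lemma tendsto_integral_of_tendsto_measure_lt {Y : ℕ → Ω → ℝ} {C : ℝ}
    (hY : ∀ t, Measurable (Y t)) (h0 : ∀ t ω, 0 ≤ Y t ω) (hC : ∀ t ω, Y t ω ≤ C)
    (h : ∀ δ > 0, Tendsto (fun t => μ {ω | δ < Y t ω}) atTop (nhds 0)) :
    Tendsto (fun t => ∫ ω, Y t ω ∂μ) atTop (nhds 0) := by
  refine tendsto_order.2 ⟨fun a ha => .of_forall fun t =>
    ha.trans_le (integral_nonneg (h0 t)), fun ε hε => ?_⟩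
  set δ := ε / (2 * (μ.real Set.univ + 1))
  have hδ : 0 < δ := by positivity
  have hδε : δ * μ.real Set.univ < ε / 2 := by
    rw [div_mul_eq_mul_div, div_lt_div_iff₀ (by positivity) two_pos]
    nlinarith [measureReal_nonneg (μ := μ) (s := Set.univ)]
  have hsmall : Tendsto (fun t => C * μ.real {ω | δ < Y t ω}) atTop (nhds 0) := by
    simpa [measureReal_def] using
      ((ENNReal.tendsto_toReal ENNReal.zero_ne_top).comp (h δ hδ)).const_mul C
  filter_upwards [(tendsto_order.1 hsmall).2 (ε / 2) (half_pos hε)] with t ht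
  linarith [integral_le_mul_measureReal_add (μ := μ) (hY t) (h0 t) (hC t) hδ.le]

end BoundedConvergence

section RandomProducts

open Matrix

variable {n α Ω : Type*} [Fintype n] [DecidableEq n] {K : α → Matrix n n ℝ} {ι : ℕ → Ω → α}

lemma ratioSpreadLE_prod_of_le_matchCount {L : ℕ} {w : ℕ → α} {ε : ℝ}
    (hK : ∀ a, K a ∈ rowStochasticPosDiag n) (hε : 0 < ε) (hε1 : ε ≤ 1)
    (hB : ∀ i j, ε ≤ ((List.range L).map fun l => K (w l)).prod i j)
    {t g : ℕ} {ω : Ω} (hg : 0 < g) (hgt : g ≤ matchCount ι L w (t / L) ω) :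
    RatioSpreadLE ((List.range t).map fun u => K (ι (u + 1) ω)).prod ((1 - ε) ^ (g - 1) * ε⁻¹) := by
  classical
  set f : ℕ → Matrix n n ℝ := fun u => K (ι (u + 1) ω)
  set blocks := (List.range (t / L)).map fun b => ((List.range L).map fun l => f (b * L + l)).prod
  set tail := (List.range (t % L)).map fun u => f (t / L * L + u)
  have hsplit : ((List.range t).map f).prod = (blocks ++ tail).prod := by
    conv_lhs => rw [← Nat.div_add_mod' t L]
    rw [List.range_add, List.map_append, List.prod_append, List.prod_append,
      List.prod_map_range_mul_eq_prod_blocks, List.map_map]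
    rfl
  have hmem : ∀ A ∈ blocks ++ tail, A ∈ rowStochasticPosDiag n := by
    simp only [List.mem_append, List.mem_map, blocks, tail]
    rintro A (⟨b, -, rfl⟩ | ⟨u, -, rfl⟩)
    · exact Submonoid.list_prod_mem _ (by simpa [f] using fun _ _ => hK _)
    · exact hK _
  have hcount : g ≤ (blocks ++ tail).countP fun A => decide (∀ i j, ε ≤ A i j) := by
    refine hgt.trans (le_trans ?_ (List.countP_append ▸ Nat.le_add_right _ _))
    rw [List.countP_map]
    refine List.countP_mono_left fun b _ hb => ?_
    replace hb : ω ∈ blockMatch ι L w b := of_decide_eq_true hb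
    have : ((List.range L).map fun l => f (b * L + l)) = (List.range L).map fun l => K (w l) :=
      List.map_congr_left fun l hl => congrArg K (hb l (List.mem_range.1 hl))
    simpa [this] using hB
  have h := ratioSpreadLE_mul_list_prod_of_countP_pos hε hmem (one_mem _) (hg.trans_le hcount)
  rw [one_mul, ← hsplit] at h
  refine h.mono (mul_le_mul_of_nonneg_right ?_ (inv_nonneg.2 hε.le))
  exact pow_le_pow_of_le_one (sub_nonneg.2 hε1) (sub_le_self _ hε.le) (by omega)

variable [MeasurableSpace Ω]

lemma measurable_list_prod_apply {f : ℕ → Ω → Matrix n n ℝ}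
    (hf : ∀ u i j, Measurable fun ω => f u ω i j) (t : ℕ) (i j : n) :
    Measurable fun ω => ((List.range t).map fun u => f u ω).prod i j := by
  induction t generalizing j with
  | zero => simp
  | succ t ih =>
    simp only [List.range_succ, List.map_append, List.prod_append, List.map_cons, List.map_nil,
      List.prod_cons, List.prod_nil, mul_one, mul_apply]
    exact Finset.measurable_sum _ fun k _ => (ih k).mul (hf t k j)

variable [Fintype α] [MeasurableSpace α] [MeasurableSingletonClass α] {μ : Measure Ω}
  [IsProbabilityMeasure μ] {p : α → ℝ}

lemma tendsto_measure_lt_sum_sq_colWeightedAvg_sub_avg [Nonempty n]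
    (hK : ∀ a, K a ∈ rowStochasticPosDiag n) (hp : ∀ a, 0 < p a)
    (hprim : _root_.IsPrimitive (∑ a, p a • K a)) (hι : ∀ t, Measurable (ι t))
    (hiid : ∀ (s : Finset ℕ) (g : ℕ → α),
      μ {ω | ∀ t ∈ s, ι t ω = g t} = ∏ t ∈ s, ENNReal.ofReal (p (g t)))
    (x0 : n → ℝ) {δ : ℝ} (hδ : 0 < δ) :
    Tendsto (fun t => μ {ω | δ < ∑ j, (colWeightedAvg ((List.range t).map fun u =>
      K (ι (u + 1) ω)).prod x0 j - (Fintype.card n : ℝ)⁻¹ * ∑ i, x0 i) ^ 2}) atTop (nhds 0) := by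
  have hprod : ∀ l : List α, (l.map K).prod ∈ rowStochasticPosDiag n := fun l =>
    Submonoid.list_prod_mem _ (by simpa using fun a _ => hK a)
  obtain ⟨word, hne, hpos⟩ := exists_list_prod_pos hK (fun a => (hp a).le) hprim
  set L := word.length
  set w : ℕ → α := fun l => word.getD l (word.head hne)
  have hBw : ((List.range L).map fun l => K (w l)).prod = (word.map K).prod :=
    congrArg List.prod <| List.ext_getElem (by simp [L]) fun l h1 h2 => by
      simp [w, List.getElem?_eq_getElem (show l < word.length by simpa [L] using h1)]
  obtain ⟨ij, hij⟩ := Finite.exists_min fun ij : n × n => (word.map K).prod ij.1 ij.2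
  set ε := (word.map K).prod ij.1 ij.2
  have hε : 0 < ε := hpos _ _
  have hε1 : ε ≤ 1 := le_one_of_mem_rowStochastic (hprod word).1
  have hB : ∀ i j, ε ≤ ((List.range L).map fun l => K (w l)).prod i j := fun i j =>
    hBw ▸ hij (i, j)
  obtain ⟨g, hg⟩ : ∃ g : ℕ, ((1 - ε) ^ g * ε⁻¹ * ∑ i, |x0 i|) ^ 2 < δ := by
    have h := (((tendsto_pow_atTop_nhds_zero_of_lt_one (sub_nonneg.2 hε1)
      (sub_lt_self 1 hε)).mul_const ε⁻¹).mul_const (∑ i, |x0 i|)).pow 2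
    simp only [zero_mul, ne_eq, OfNat.ofNat_ne_zero, not_false_eq_true, zero_pow] at h
    exact (h.eventually (gt_mem_nhds hδ)).exists
  have hq : ∏ l ∈ Finset.range L, ENNReal.ofReal (p (w l)) ≠ 0 :=
    Finset.prod_ne_zero_iff.2 fun l _ => (ENNReal.ofReal_pos.2 (hp _)).ne'
  refine tendsto_of_tendsto_of_tendsto_of_le_of_le tendsto_const_nhds
    ((tendsto_measure_matchCount_lt (ν := fun a => ENNReal.ofReal (p a)) (w := w) hι hiid hq
      (g + 1)).comp (Nat.tendsto_div_const_atTop (List.length_pos_iff.2 hne).ne'))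
    (fun _ => bot_le) fun t => measure_mono fun ω hω => ?_
  by_contra hcount
  have hspread := ratioSpreadLE_prod_of_le_matchCount hK hε hε1 hB g.succ_pos (not_lt.1 hcount)
  have hbound := hspread.sum_sq_colWeightedAvg_sub_avg_le
    (by simpa [List.map_map, Function.comp_def] using
      (hprod ((List.range t).map fun u => ι (u + 1) ω)).1) x0
  rw [Nat.succ_sub_one] at hbound
  exact (hω.trans_le hbound).not_gt hg

end RandomProducts

theorem stmt15_general {N M : ℕ} (hN : 1 ≤ N)
    (K : Fin M → Matrix (Fin N) (Fin N) ℝ)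
    (hK : ∀ k, RowStochastic (K k))
    (hdiag : ∀ k i, 0 < K k i i)
    (p : Fin M → ℝ) (hp : ∀ k, 0 < p k)
    (hprim : _root_.IsPrimitive (∑ k, p k • K k))
    -- `(K(t))_{t ≥ 1}` is an i.i.d. sequence of random matrices, `K(t) = K (ι t ω)`,
    -- with `ℙ[K(t) = Kᵢ] = pᵢ`:
    {Ω : Type*} [MeasurableSpace Ω] (μ : Measure Ω) [IsProbabilityMeasure μ]
    (ι : ℕ → Ω → Fin M) (hmeas : ∀ t, Measurable (ι t))
    (hiid : ∀ (s : Finset ℕ) (g : ℕ → Fin M),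
      μ {ω | ∀ t ∈ s, ι t ω = g t} = ∏ t ∈ s, ENNReal.ofReal (p (g t)))
    -- `P(t) = K(1) K(2) ⋯ K(t)`, `s(t)ᵀ = x(0)ᵀ P(t)`, `w(t)ᵀ = 𝟙ᵀ P(t)`, `x(t) = s(t)/w(t)`:
    (P : ℕ → Ω → Matrix (Fin N) (Fin N) ℝ)
    (hP : ∀ t ω, P t ω = ((List.range t).map fun u => K (ι (u + 1) ω)).prod)
    (x0 : Fin N → ℝ)
    (x : ℕ → Ω → Fin N → ℝ)
    (hx : ∀ t ω j, x t ω j = (∑ i, P t ω i j * x0 i) / (∑ i, P t ω i j))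
    (xave : ℝ) (hxave : xave = (N : ℝ)⁻¹ * ∑ i, x0 i) :
    Tendsto (fun t => ∫ ω, (∑ j, (x t ω j - xave) ^ 2) ∂μ) atTop (nhds 0) := by
  have : Nonempty (Fin N) := ⟨⟨0, hN⟩⟩
  have hKS : ∀ a, K a ∈ rowStochasticPosDiag (Fin N) := fun a =>
    ⟨mem_rowStochastic_iff_sum.2 (hK a), hdiag a⟩
  have hPS : ∀ t ω, P t ω ∈ rowStochasticPosDiag (Fin N) := fun t ω => by
    rw [hP]
    exact Submonoid.list_prod_mem _ (by simpa using fun _ _ => hKS _)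
  have herr : ∀ t ω, ∑ j, (x t ω j - xave) ^ 2 = ∑ j, (colWeightedAvg (P t ω) x0 j
      - (Fintype.card (Fin N) : ℝ)⁻¹ * ∑ i, x0 i) ^ 2 := fun t ω => by
    simp [hx, hxave, colWeightedAvg]
  simp only [herr]
  have hPmeas : ∀ t i j, Measurable fun ω => P t ω i j := fun t i j => by
    simpa only [hP] using measurable_list_prod_apply (f := fun u ω => K (ι (u + 1) ω))
      (fun u i j => (measurable_of_finite fun a => K a i j).comp (hmeas (u + 1))) t i j
  refine tendsto_integral_of_tendsto_measure_lt
    (fun t => Finset.measurable_sum _ fun j _ =>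
      ((measurable_colWeightedAvg (hPmeas t) x0 j).sub_const _).pow_const 2)
    (fun t ω => Finset.sum_nonneg fun j _ => sq_nonneg _)
    (fun t ω => sum_sq_colWeightedAvg_sub_avg_le (hPS t ω) x0) fun δ hδ => ?_
  simpa only [hP] using
    tendsto_measure_lt_sum_sq_colWeightedAvg_sub_avg hKS hp hprim hmeas hiid x0 hδ

theorem stmt15 {N M : ℕ} (hN : 1 ≤ N) (hM : 1 ≤ M)
    (K : Fin M → Matrix (Fin N) (Fin N) ℝ)
    (hK : ∀ k, RowStochastic (K k))
    (hdiag : ∀ k i, 0 < K k i i)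
    (p : Fin M → ℝ) (hp : ∀ k, 0 < p k) (hpsum : ∑ k, p k = 1)
    (hprim : _root_.IsPrimitive (∑ k, p k • K k))
    -- `(K(t))_{t ≥ 1}` is an i.i.d. sequence of random matrices, `K(t) = K (ι t ω)`,
    -- with `ℙ[K(t) = Kᵢ] = pᵢ`:
    {Ω : Type*} [MeasurableSpace Ω] (μ : Measure Ω) [IsProbabilityMeasure μ]
    (ι : ℕ → Ω → Fin M) (hmeas : ∀ t, Measurable (ι t))
    (hiid : ∀ (s : Finset ℕ) (g : ℕ → Fin M),
      μ {ω | ∀ t ∈ s, ι t ω = g t} = ∏ t ∈ s, ENNReal.ofReal (p (g t)))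
    -- `P(t) = K(1) K(2) ⋯ K(t)`, `s(t)ᵀ = x(0)ᵀ P(t)`, `w(t)ᵀ = 𝟙ᵀ P(t)`, `x(t) = s(t)/w(t)`:
    (P : ℕ → Ω → Matrix (Fin N) (Fin N) ℝ)
    (hP : ∀ t ω, P t ω = ((List.range t).map fun u => K (ι (u + 1) ω)).prod)
    (x0 : Fin N → ℝ)
    (x : ℕ → Ω → Fin N → ℝ)
    (hx : ∀ t ω j, x t ω j = (∑ i, P t ω i j * x0 i) / (∑ i, P t ω i j))
    (xave : ℝ) (hxave : xave = (N : ℝ)⁻¹ * ∑ i, x0 i) :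
    Tendsto (fun t => ∫ ω, (∑ j, (x t ω j - xave) ^ 2) ∂μ) atTop (nhds 0) :=
  stmt15_general hN K hK hdiag p hp hprim μ ι hmeas hiid P hP x0 x hx xave hxave
end

section
/- Let N ≥ 1. For each function ℓ : {1,…,N} → {1,…,N}, define the N×N matrix K(ℓ) = (1/2)I + (1/2)Σᵢ₌₁ᴺ eᵢ e_{ℓ(i)}ᵀ (the Push-Sum update matrix of Kempe et al.). Then the average over all N^N functions ℓ satisfies N^{−N} Σ_ℓ K(ℓ)K(ℓ)ᵀ = (1/2 − 1/(4N))·I + (3/4)·J, and consequently (I−J) · [ N^{−N} Σ_ℓ K(ℓ)K(ℓ)ᵀ ] · (I−J) = (1/2 − 1/(4N))·(I−J). -/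
/-!
Write `K(ℓ) = (I + P ℓ) / 2`, where `P ℓ` is the 0/1 matrix of the graph of `ℓ`; then
`K Kᵀ = (I + P + Pᵀ + P Pᵀ) / 4` and `(P Pᵀ)_{ab} = [ℓ a = ℓ b]`. For a uniformly
random `ℓ`, both `ℓ a = c` and, when `a ≠ b`, `ℓ a = ℓ b` have probability `1/N`;
hence the average of `P` is `J` and that of `P Pᵀ` is `(1 - 1/N) I + J`. The second
identity follows because `J` is idempotent, so `(I - J) J = 0`.
-/

open Matrix Finset

/-- `J = (1/N) 𝟙 𝟙ᵀ`, the `N × N` averaging matrix. -/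
noncomputable def Jmat (N : ℕ) : Matrix (Fin N) (Fin N) ℝ :=
  Matrix.of fun _ _ => (N : ℝ)⁻¹

section Counting

variable {ι κ : Type*} [Fintype ι] [DecidableEq ι] [Fintype κ] [DecidableEq κ]

theorem card_filter_apply_eq (a : ι) (c : κ) :
    #{ℓ : ι → κ | ℓ a = c} = Fintype.card κ ^ (Fintype.card ι - 1) := by
  simpa using Fintype.card_filter_piFinset_const_eq_of_mem (univ : Finset κ) a (mem_univ c)

theorem card_filter_apply_eq_apply [Nonempty κ] {a b : ι} (hab : a ≠ b) :
    #{ℓ : ι → κ | ℓ a = ℓ b} = Fintype.card κ ^ (Fintype.card ι - 1) := by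
  obtain ⟨c⟩ := ‹Nonempty κ›
  rw [← card_filter_apply_eq b c]
  refine card_nbij' (Function.update · b c) (fun ℓ => Function.update ℓ b (ℓ a)) ?_ ?_ ?_ ?_
  all_goals intro ℓ hℓ; simp_all

end Counting

def graphMatrix (R : Type*) [Zero R] [One R] {ι κ : Type*} [DecidableEq κ] (ℓ : ι → κ) :
    Matrix ι κ R :=
  of fun i j => if ℓ i = j then 1 else 0

section GraphMatrix
variable {R : Type*} {ι κ : Type*} [DecidableEq κ]

@[simp]
theorem graphMatrix_apply [Zero R] [One R] (ℓ : ι → κ) (i : ι) (j : κ) :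
    graphMatrix R ℓ i j = if ℓ i = j then 1 else 0 := rfl

theorem sum_single_eq_graphMatrix [Fintype ι] [DecidableEq ι] [Semiring R] (ℓ : ι → κ) :
    ∑ i, single i (ℓ i) (1 : R) = graphMatrix R ℓ := by
  ext a c
  simp only [Matrix.sum_apply, single_apply, ite_and, sum_ite_eq', mem_univ, if_true,
    graphMatrix_apply]

theorem graphMatrix_mul_transpose_apply [Fintype κ] [Semiring R] (ℓ : ι → κ) (a b : ι) :
    (graphMatrix R ℓ * (graphMatrix R ℓ)ᵀ) a b = if ℓ a = ℓ b then 1 else 0 := by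
  simp [mul_apply]

end GraphMatrix

theorem half_smul_one_add_mul_transpose {n : Type*} [Fintype n] [DecidableEq n]
    (A : Matrix n n ℝ) :
    ((1/2 : ℝ) • 1 + (1/2 : ℝ) • A) * ((1/2 : ℝ) • 1 + (1/2 : ℝ) • A)ᵀ =
      (1/4 : ℝ) • (1 + A + Aᵀ + A * Aᵀ) := by
  simp only [transpose_add, transpose_smul, transpose_one, add_mul, mul_add, smul_mul_smul,
    one_mul, mul_one]
  module

theorem inv_pow_self_mul_pow_pred {N : ℕ} (hN : N ≠ 0) :
    ((N : ℝ) ^ N)⁻¹ * (N : ℝ) ^ (N - 1) = (N : ℝ)⁻¹ := by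
  obtain ⟨m, rfl⟩ := Nat.exists_eq_add_one_of_ne_zero hN
  have h : ((m + 1 : ℕ) : ℝ) ≠ 0 := by exact_mod_cast hN
  rw [Nat.add_sub_cancel, pow_succ, _root_.mul_inv_rev, inv_mul_cancel_right₀ (pow_ne_zero m h)]

theorem inv_pow_smul_sum_graphMatrix (N : ℕ) :
    ((N : ℝ) ^ N)⁻¹ • ∑ ℓ : Fin N → Fin N, graphMatrix ℝ ℓ = Jmat N := by
  ext a c
  simp [Matrix.sum_apply, sum_boole, card_filter_apply_eq, Jmat,
    inv_pow_self_mul_pow_pred a.pos.ne']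

theorem inv_pow_smul_sum_graphMatrix_mul_transpose (N : ℕ) :
    ((N : ℝ) ^ N)⁻¹ • ∑ ℓ : Fin N → Fin N, graphMatrix ℝ ℓ * (graphMatrix ℝ ℓ)ᵀ
      = (1 - (N : ℝ)⁻¹) • 1 + Jmat N := by
  ext a b
  have : Nonempty (Fin N) := ⟨a⟩
  rcases eq_or_ne a b with rfl | hab
  · simp [Matrix.sum_apply, graphMatrix_mul_transpose_apply, Jmat]
  · simp [Matrix.sum_apply, graphMatrix_mul_transpose_apply, sum_boole,
      card_filter_apply_eq_apply hab, Jmat, hab, inv_pow_self_mul_pow_pred a.pos.ne']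

theorem transpose_Jmat (N : ℕ) : (Jmat N)ᵀ = Jmat N := rfl

theorem isIdempotentElem_Jmat (N : ℕ) : IsIdempotentElem (Jmat N) := by
  ext a b
  have : (N : ℝ) ≠ 0 := by exact_mod_cast a.pos.ne'
  simp [Jmat, mul_apply]
  field_simp

theorem IsIdempotentElem.one_sub_mul_smul_one_add_smul_mul_one_sub {R A : Type*} [CommSemiring R]
    [Ring A] [Algebra R A] {e : A} (he : IsIdempotentElem e) (c d : R) :
    (1 - e) * (c • 1 + d • e) * (1 - e) = c • (1 - e) := by
  have h : (1 - e) * e = 0 := by rw [sub_mul, one_mul, he.eq, sub_self]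
  rw [mul_add, mul_smul_comm, mul_smul_comm, mul_one, h, smul_zero, add_zero, smul_mul_assoc,
    he.one_sub.eq]

theorem stmt17_general {N : ℕ}
    -- the Push-Sum update matrices `K(ℓ) = (1/2)I + (1/2)Σᵢ eᵢ e_{ℓ(i)}ᵀ`:
    (K : (Fin N → Fin N) → Matrix (Fin N) (Fin N) ℝ)
    (hKdef : ∀ ℓ, K ℓ =
      (1 / 2 : ℝ) • 1 + (1 / 2 : ℝ) • ∑ i, Matrix.single i (ℓ i) (1 : ℝ)) :
    ((N : ℝ) ^ N)⁻¹ • (∑ ℓ : Fin N → Fin N, K ℓ * (K ℓ)ᵀ) =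
        (1 / 2 - 1 / (4 * N) : ℝ) • (1 : Matrix (Fin N) (Fin N) ℝ) +
          (3 / 4 : ℝ) • Jmat N ∧
      (1 - Jmat N) * (((N : ℝ) ^ N)⁻¹ • (∑ ℓ : Fin N → Fin N, K ℓ * (K ℓ)ᵀ)) *
          (1 - Jmat N) =
        (1 / 2 - 1 / (4 * N) : ℝ) • (1 - Jmat N) := by
  have hKK (ℓ : Fin N → Fin N) : K ℓ * (K ℓ)ᵀ = (1 / 4 : ℝ) • (1 + graphMatrix ℝ ℓ +
      (graphMatrix ℝ ℓ)ᵀ + graphMatrix ℝ ℓ * (graphMatrix ℝ ℓ)ᵀ) := by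
    rw [hKdef, sum_single_eq_graphMatrix, half_smul_one_add_mul_transpose]
  have hone : ((N : ℝ) ^ N)⁻¹ • ∑ _ℓ : Fin N → Fin N, (1 : Matrix (Fin N) (Fin N) ℝ) = 1 := by
    have : (N : ℝ) ^ N ≠ 0 := by exact_mod_cast Nat.pow_self_pos.ne'
    simp [sum_const, ← Nat.cast_smul_eq_nsmul ℝ, smul_smul, this]
  have hmean : ((N : ℝ) ^ N)⁻¹ • ∑ ℓ, K ℓ * (K ℓ)ᵀ =
      (1 / 2 - 1 / (4 * N) : ℝ) • (1 : Matrix (Fin N) (Fin N) ℝ) + (3 / 4 : ℝ) • Jmat N := by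
    simp only [hKK, ← smul_sum, smul_comm _ (1 / 4 : ℝ), sum_add_distrib, smul_add,
      ← transpose_sum, ← transpose_smul, hone, inv_pow_smul_sum_graphMatrix,
      inv_pow_smul_sum_graphMatrix_mul_transpose]
    rw [transpose_smul, transpose_Jmat]
    module
  exact ⟨hmean, by rw [hmean, (isIdempotentElem_Jmat N).one_sub_mul_smul_one_add_smul_mul_one_sub]⟩

theorem stmt17 {N : ℕ} (hN : 1 ≤ N)
    -- the Push-Sum update matrices `K(ℓ) = (1/2)I + (1/2)Σᵢ eᵢ e_{ℓ(i)}ᵀ`: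
    (K : (Fin N → Fin N) → Matrix (Fin N) (Fin N) ℝ)
    (hKdef : ∀ ℓ, K ℓ =
      (1 / 2 : ℝ) • 1 + (1 / 2 : ℝ) • ∑ i, Matrix.single i (ℓ i) (1 : ℝ)) :
    ((N : ℝ) ^ N)⁻¹ • (∑ ℓ : Fin N → Fin N, K ℓ * (K ℓ)ᵀ) =
        (1 / 2 - 1 / (4 * N) : ℝ) • (1 : Matrix (Fin N) (Fin N) ℝ) +
          (3 / 4 : ℝ) • Jmat N ∧
      (1 - Jmat N) * (((N : ℝ) ^ N)⁻¹ • (∑ ℓ : Fin N → Fin N, K ℓ * (K ℓ)ᵀ)) *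
          (1 - Jmat N) =
        (1 / 2 - 1 / (4 * N) : ℝ) • (1 - Jmat N) :=
  stmt17_general K hKdef
end

section
/- Let G be a connected simple undirected graph on the vertex set {1,…,N} with N ≥ 2, with adjacency matrix A, degree matrix D = diag(d₁,…,d_N) where dᵢ is the degree of vertex i, and Laplacian matrix L = D − A. For each i ∈ {1,…,N}, define the BWGossip update matrix Kᵢ = I − eᵢeᵢᵀ(D+I)^{−1}L. Then each Kᵢ is row-stochastic with strictly positive diagonal entries, the uniform average satisfies (1/N)Σᵢ₌₁ᴺ Kᵢ = I − (1/N)(D+I)^{−1}L, and this average matrix is primitive. -/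
open Matrix Finset

/-
Write `P = (D + I)⁻¹ L`. Its rows sum to zero, its diagonal entries `dᵢ / (dᵢ + 1)` lie in
`[0, 1)`, and its off-diagonal entries are `≤ 0`, strictly negative exactly along the edges.
For any such `M`, `I - M` is row-stochastic with positive diagonal; and `eᵢeᵢᵀ P` (one row of
`P`) and `P / N` keep this sign pattern. Finally a nonnegative `T` with positive diagonal that is
positive along the edges of `G` has `(T ^ m) i j > 0` once some walk from `i` to `j` has length
`≤ m`, so for connected `G` already `T ^ N` is positive.
-/

section RowStochastic

variable {N : ℕ} {M : Matrix (Fin N) (Fin N) ℝ}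

lemma rowStochastic_one_sub (hrow : ∀ i, ∑ j, M i j = 0) (hdiag : ∀ i, M i i < 1)
    (hoff : ∀ i j, i ≠ j → M i j ≤ 0) : RowStochastic (1 - M) ∧ ∀ i, 0 < (1 - M) i i := by
  have hpos : ∀ i, 0 < (1 - M) i i := fun i => by simpa using hdiag i
  refine ⟨⟨fun i j => ?_, fun i => ?_⟩, hpos⟩
  · rcases eq_or_ne i j with rfl | hij
    · exact (hpos i).le
    · simpa [one_apply_ne hij] using hoff i j hij
  · simp [sum_sub_distrib, hrow, one_apply]

lemma rowStochastic_one_sub_single_mul (hrow : ∀ i, ∑ j, M i j = 0) (hdiag : ∀ i, M i i < 1)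
    (hoff : ∀ i j, i ≠ j → M i j ≤ 0) (i : Fin N) :
    RowStochastic (1 - single i i (1 : ℝ) * M) ∧ ∀ k, 0 < (1 - single i i (1 : ℝ) * M) k k := by
  refine rowStochastic_one_sub (fun k => ?_) (fun k => ?_) (fun k j hkj => ?_) <;>
    rcases eq_or_ne k i with rfl | hki <;> simp [single_mul_apply_of_ne, *]

lemma rowStochastic_one_sub_smul (hrow : ∀ i, ∑ j, M i j = 0) (hdiag : ∀ i, M i i ∈ Set.Ico 0 1)
    (hoff : ∀ i j, i ≠ j → M i j ≤ 0) {c : ℝ} (hc₀ : 0 ≤ c) (hc₁ : c ≤ 1) :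
    RowStochastic (1 - c • M) ∧ ∀ k, 0 < (1 - c • M) k k := by
  apply rowStochastic_one_sub
  · simp [← mul_sum, hrow]
  · exact fun k => mul_lt_one_of_nonneg_of_lt_one_right hc₁ (hdiag k).1 (hdiag k).2
  · exact fun k j hkj => mul_nonpos_of_nonneg_of_nonpos hc₀ (hoff k j hkj)

end RowStochastic

namespace Matrix

lemma inv_card_smul_sum_one_sub_single_mul {V R : Type*} [Fintype V] [DecidableEq V]
    [Nonempty V] [Field R] [CharZero R] (M : Matrix V V R) :
    (Fintype.card V : R)⁻¹ • ∑ i, (1 - single i i 1 * M) = 1 - (Fintype.card V : R)⁻¹ • M := by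
  have hcard : (Fintype.card V : R) ≠ 0 := Nat.cast_ne_zero.2 Fintype.card_ne_zero
  rw [sum_sub_distrib, ← sum_mul, sum_single_one, one_mul, sum_const, card_univ, smul_sub,
    ← Nat.cast_smul_eq_nsmul R, smul_smul, inv_mul_cancel₀ hcard, one_smul]

variable {V R : Type*} [Fintype V] [DecidableEq V]
  [CommSemiring R] [PartialOrder R] [IsStrictOrderedRing R] {T : Matrix V V R}

lemma pow_apply_self_pos (hT : ∀ i j, 0 ≤ T i j) (hdiag : ∀ i, 0 < T i i) (m : ℕ) (i : V) :
    0 < (T ^ m) i i := by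
  induction m with
  | zero => simp
  | succ m ih =>
    rw [pow_succ, mul_apply]
    exact sum_pos' (fun k _ => mul_nonneg (pow_apply_nonneg hT m i k) (hT k i))
      ⟨i, mem_univ i, mul_pos ih (hdiag i)⟩

lemma pow_apply_pos_of_walk {G : SimpleGraph V} (hT : ∀ i j, 0 ≤ T i j)
    (hdiag : ∀ i, 0 < T i i) (hadj : ∀ i j, G.Adj i j → 0 < T i j) {i j : V} (w : G.Walk i j)
    {m : ℕ} (hm : w.length ≤ m) : 0 < (T ^ m) i j := by
  induction w generalizing m with
  | nil => exact pow_apply_self_pos hT hdiag m _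
  | @cons i k j hik p ih =>
    obtain ⟨m, rfl⟩ : ∃ m', m = m' + 1 := Nat.exists_eq_add_one.mpr (by simp at hm; omega)
    rw [pow_succ', mul_apply]
    exact sum_pos' (fun l _ => mul_nonneg (hT i l) (pow_apply_nonneg hT m l j))
      ⟨k, mem_univ k, mul_pos (hadj i k hik) (ih (by simpa using hm))⟩

end Matrix

lemma isPrimitive_of_connected {V : Type*} [Fintype V] [DecidableEq V] {G : SimpleGraph V}
    (hG : G.Connected) {T : Matrix V V ℝ} (hT : ∀ i j, 0 ≤ T i j) (hdiag : ∀ i, 0 < T i i)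
    (hadj : ∀ i j, G.Adj i j → 0 < T i j) : _root_.IsPrimitive T := by
  have : Nonempty V := hG.nonempty
  refine ⟨Fintype.card V, Fintype.card_pos, fun i j => ?_⟩
  obtain ⟨w⟩ := hG.preconnected i j
  exact pow_apply_pos_of_walk hT hdiag hadj w.toPath.1 w.toPath.2.length_lt.le

namespace SimpleGraph

variable {V R : Type*} [Fintype V] [DecidableEq V] (G : SimpleGraph V) [DecidableRel G.Adj]

lemma lapMatrix_apply_self [AddGroupWithOne R] (i : V) : G.lapMatrix R i i = G.degree i := by
  simp [lapMatrix, degMatrix]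

lemma lapMatrix_apply_of_ne [AddGroupWithOne R] {i j : V} (h : i ≠ j) :
    G.lapMatrix R i j = -G.adjMatrix R i j := by
  simp [lapMatrix, degMatrix, h]

lemma sum_lapMatrix_apply [NonAssocRing R] (i : V) : ∑ j, G.lapMatrix R i j = 0 := by
  simpa [mulVec, dotProduct] using congrFun (G.lapMatrix_mulVec_const_eq_zero (R := R)) i

lemma inv_degMatrix_add_one [Field R] [LinearOrder R] [IsStrictOrderedRing R] :
    (G.degMatrix R + 1)⁻¹ = diagonal fun i => ((G.degree i : R) + 1)⁻¹ := by
  refine inv_eq_left_inv ?_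
  rw [degMatrix, ← diagonal_one, diagonal_add, diagonal_mul_diagonal]
  congr! 2 with i
  exact inv_mul_cancel₀ (by positivity)

variable [Field R] [LinearOrder R] [IsStrictOrderedRing R]

lemma inv_degMatrix_add_one_mul_lapMatrix_apply (i j : V) :
    ((G.degMatrix R + 1)⁻¹ * G.lapMatrix R) i j = ((G.degree i : R) + 1)⁻¹ * G.lapMatrix R i j := by
  rw [inv_degMatrix_add_one, diagonal_mul]

lemma sum_inv_degMatrix_add_one_mul_lapMatrix_apply (i : V) :
    ∑ j, ((G.degMatrix R + 1)⁻¹ * G.lapMatrix R) i j = 0 := by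
  simp only [inv_degMatrix_add_one_mul_lapMatrix_apply, ← mul_sum, sum_lapMatrix_apply, mul_zero]

lemma inv_degMatrix_add_one_mul_lapMatrix_apply_self_mem_Ico (i : V) :
    ((G.degMatrix R + 1)⁻¹ * G.lapMatrix R) i i ∈ Set.Ico 0 1 := by
  rw [inv_degMatrix_add_one_mul_lapMatrix_apply, lapMatrix_apply_self, inv_mul_eq_div]
  exact ⟨by positivity, (div_lt_one (by positivity)).2 (lt_add_one _)⟩

lemma inv_degMatrix_add_one_mul_lapMatrix_apply_nonpos {i j : V} (h : i ≠ j) :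
    ((G.degMatrix R + 1)⁻¹ * G.lapMatrix R) i j ≤ 0 := by
  rw [inv_degMatrix_add_one_mul_lapMatrix_apply, lapMatrix_apply_of_ne G h, mul_neg, neg_nonpos]
  by_cases hij : G.Adj i j <;> simp [hij]; positivity

lemma inv_degMatrix_add_one_mul_lapMatrix_apply_neg {i j : V} (h : G.Adj i j) :
    ((G.degMatrix R + 1)⁻¹ * G.lapMatrix R) i j < 0 := by
  rw [inv_degMatrix_add_one_mul_lapMatrix_apply, lapMatrix_apply_of_ne G h.ne, mul_neg,
    neg_neg_iff_pos, adjMatrix_apply, if_pos h, mul_one]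
  positivity

end SimpleGraph

theorem stmt19_general {N : ℕ}
    (G : SimpleGraph (Fin N)) [DecidableRel G.Adj] (hconn : G.Connected)
    -- adjacency matrix `A`, degree matrix `D`, Laplacian `L = D − A`:
    (A D L : Matrix (Fin N) (Fin N) ℝ)
    (hA : A = G.adjMatrix ℝ)
    (hD : D = Matrix.diagonal fun i => (G.degree i : ℝ))
    (hL : L = D - A)
    -- the BWGossip update matrices `Kᵢ = I − eᵢeᵢᵀ (D+I)⁻¹ L`:
    (K : Fin N → Matrix (Fin N) (Fin N) ℝ)
    (hKdef : ∀ i, K i = 1 - Matrix.single i i (1 : ℝ) * (D + 1)⁻¹ * L) :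
    (∀ i, RowStochastic (K i) ∧ ∀ j, 0 < K i j j) ∧
      (N : ℝ)⁻¹ • (∑ i, K i) = 1 - (N : ℝ)⁻¹ • ((D + 1)⁻¹ * L) ∧
      _root_.IsPrimitive (1 - (N : ℝ)⁻¹ • ((D + 1)⁻¹ * L)) := by
  have hLap : L = G.lapMatrix ℝ := by rw [hL, hD, hA]; rfl
  have hDeg : D = G.degMatrix ℝ := hD
  subst hLap hDeg
  set P := (G.degMatrix ℝ + 1)⁻¹ * G.lapMatrix ℝ
  have hK : ∀ i, K i = 1 - single i i 1 * P := fun i => by rw [hKdef, mul_assoc]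
  have hrow : ∀ i, ∑ j, P i j = 0 := G.sum_inv_degMatrix_add_one_mul_lapMatrix_apply
  have hdiag : ∀ i, P i i ∈ Set.Ico 0 1 := G.inv_degMatrix_add_one_mul_lapMatrix_apply_self_mem_Ico
  have hoff : ∀ i j, i ≠ j → P i j ≤ 0 :=
    fun _ _ => G.inv_degMatrix_add_one_mul_lapMatrix_apply_nonpos
  have : Nonempty (Fin N) := hconn.nonempty
  have hN : (1 : ℝ) ≤ N := by exact_mod_cast Fin.pos'
  have hT := rowStochastic_one_sub_smul hrow hdiag hoff (by positivity) (inv_le_one_of_one_le₀ hN)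
  refine ⟨fun i => hK i ▸ rowStochastic_one_sub_single_mul hrow (fun k => (hdiag k).2) hoff i,
    by simpa [hK] using inv_card_smul_sum_one_sub_single_mul P,
    isPrimitive_of_connected hconn hT.1.1 hT.2 fun i j hij => ?_⟩
  simp only [Matrix.sub_apply, one_apply_ne hij.ne, Matrix.smul_apply, smul_eq_mul, zero_sub,
    neg_pos]
  exact mul_neg_of_pos_of_neg (by positivity) (G.inv_degMatrix_add_one_mul_lapMatrix_apply_neg hij)

theorem stmt19 {N : ℕ} (hN : 2 ≤ N)
    (G : SimpleGraph (Fin N)) [DecidableRel G.Adj] (hconn : G.Connected)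
    -- adjacency matrix `A`, degree matrix `D`, Laplacian `L = D − A`:
    (A D L : Matrix (Fin N) (Fin N) ℝ)
    (hA : A = G.adjMatrix ℝ)
    (hD : D = Matrix.diagonal fun i => (G.degree i : ℝ))
    (hL : L = D - A)
    -- the BWGossip update matrices `Kᵢ = I − eᵢeᵢᵀ (D+I)⁻¹ L`:
    (K : Fin N → Matrix (Fin N) (Fin N) ℝ)
    (hKdef : ∀ i, K i = 1 - Matrix.single i i (1 : ℝ) * (D + 1)⁻¹ * L) :
    (∀ i, RowStochastic (K i) ∧ ∀ j, 0 < K i j j) ∧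
      (N : ℝ)⁻¹ • (∑ i, K i) = 1 - (N : ℝ)⁻¹ • ((D + 1)⁻¹ * L) ∧
      _root_.IsPrimitive (1 - (N : ℝ)⁻¹ • ((D + 1)⁻¹ * L)) :=
  stmt19_general G hconn A D L hA hD hL K hKdef
end
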